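/- Let G be a finite simple graph without isolated vertices and suppose that, for some integer k ≥ 2, the ideal J(G)^{(k)} is generated in a single degree. Then J(G) is generated in a single degree, say d; in particular, all minimal vertex covers of G have cardinality d (so G is unmixed) and every minimal monomial generator of J(G)^{(k)} has degree k·d. -/

import Mathlib

open MvPolynomial

/-- `C` is a vertex cover of `G`: every edge is incident to a vertex of `C`. -/
def IsVertexCover {V : Type*} (G : SimpleGraph V) (C : Set V) : Prop :=
  ∀ ⦃a b : V⦄, G.Adj a b → a ∈ C ∨ b ∈ C

/-- `C` is a minimal vertex cover of `G`. -/
def IsMinVertexCover {V : Type*} (G : SimpleGraph V) (C : Set V) : Prop :=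
  IsVertexCover G C ∧ ∀ D : Set V, D ⊂ C → ¬ IsVertexCover G D

/-- `A` is an independent set of `G`. -/
def IsIndepSet {V : Type*} (G : SimpleGraph V) (A : Set V) : Prop :=
  ∀ ⦃a⦄, a ∈ A → ∀ ⦃b⦄, b ∈ A → ¬ G.Adj a b

/-- `A` is a maximal independent set of `G`. -/
def IsMaxIndepSet {V : Type*} (G : SimpleGraph V) (A : Set V) : Prop :=
  IsIndepSet G A ∧ ∀ B : Set V, IsIndepSet G B → A ⊆ B → A = B

/-- A graph is unmixed if all maximal independent sets have the same cardinality. -/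
def Unmixed {V : Type*} (G : SimpleGraph V) : Prop :=
  ∀ A B : Set V, IsMaxIndepSet G A → IsMaxIndepSet G B → A.ncard = B.ncard

/-- `G` has no isolated vertices. -/
def HasNoIsolatedVertex {V : Type*} (G : SimpleGraph V) : Prop :=
  ∀ v : V, ∃ w : V, G.Adj v w

/-- `G` is very well-covered: no isolated vertices, an even number of vertices, and every
maximal independent set has cardinality half the number of vertices. -/
def VeryWellCovered {V : Type*} [Fintype V] (G : SimpleGraph V) : Prop :=
  HasNoIsolatedVertex G ∧ Even (Fintype.card V) ∧
    ∀ A : Set V, IsMaxIndepSet G A → 2 * A.ncard = Fintype.card V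

/-- `G` is claw-free: it has no induced subgraph isomorphic to `K_{1,3}`. -/
def ClawFree {V : Type*} (G : SimpleGraph V) : Prop :=
  ¬ ∃ a b c d : V, G.Adj a b ∧ G.Adj a c ∧ G.Adj a d ∧
      ¬ G.Adj b c ∧ ¬ G.Adj b d ∧ ¬ G.Adj c d ∧ b ≠ c ∧ b ≠ d ∧ c ≠ d

/-- The graph obtained from `G` by deleting the vertices in `A`: it has the same vertex set,
and its edges are the edges of `G` avoiding `A` (so the vertices of `A` become isolated). -/
def deleteVerts {V : Type*} (G : SimpleGraph V) (A : Set V) : SimpleGraph V where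
  Adj a b := G.Adj a b ∧ a ∉ A ∧ b ∉ A
  symm := ⟨fun a b ⟨h1, h2, h3⟩ => ⟨h1.symm, h3, h2⟩⟩
  loopless := ⟨fun a h => G.loopless.irrefl a h.1⟩

/-- The closed neighborhood `N_G[F]` of a set of vertices `F`. -/
def closedNbhdSet {V : Type*} (G : SimpleGraph V) (F : Set V) : Set V :=
  ⋃ a ∈ F, insert a (G.neighborSet a)

/-- The cover ideal `J(G)` of the graph `G`:
the intersection of the ideals `(x_i, x_j)` over the edges `{x_i, x_j}` of `G`. -/
noncomputable def coverIdeal (K : Type*) [Field K] {V : Type*} (G : SimpleGraph V) :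
    Ideal (MvPolynomial V K) :=
  ⨅ (p : V × V) (_ : G.Adj p.1 p.2), Ideal.span {X p.1, X p.2}

/-- The `k`-th symbolic power `J(G)^{(k)}` of the cover ideal of `G`:
the intersection of the ideals `(x_i, x_j)^k` over the edges `{x_i, x_j}` of `G`
(the empty intersection being the unit ideal). -/
noncomputable def symbPow (K : Type*) [Field K] {V : Type*} (G : SimpleGraph V) (k : ℕ) :
    Ideal (MvPolynomial V K) :=
  ⨅ (p : V × V) (_ : G.Adj p.1 p.2), Ideal.span {X p.1, X p.2} ^ k

/-- The degree of a monomial with exponent vector `m`. -/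
def mdeg {V : Type*} (m : V →₀ ℕ) : ℕ := m.sum fun _ e => e

/-- The monomial with exponent vector `m` is a minimal monomial generator of `I`. -/
def IsMinGen {K : Type*} [Field K] {V : Type*} (I : Ideal (MvPolynomial V K)) (m : V →₀ ℕ) :
    Prop :=
  (monomial m (1 : K)) ∈ I ∧
    ∀ i : V, m i ≠ 0 → (monomial (m - Finsupp.single i 1) (1 : K)) ∉ I

/-- `deg I`: the maximum degree of a minimal monomial generator of `I`. -/
noncomputable def genDeg {K : Type*} [Field K] {V : Type*} (I : Ideal (MvPolynomial V K)) : ℕ :=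
  sSup {d : ℕ | ∃ m : V →₀ ℕ, IsMinGen I m ∧ mdeg m = d}

/-!
For a minimal vertex cover `C`, the monomial `x_C^k` is a minimal generator of `J(G)^{(k)}`,
of degree `k * |C|`; so if `J(G)^{(k)}` is generated in a single degree, all minimal vertex
covers have the same size `d`. The minimal generators of `J(G)` are exactly the monomials `x_C`,
hence of degree `d`, and maximal independent sets are the complements of minimal vertex covers.
-/

namespace MvPolynomial

variable {σ K : Type*} [Field K] {i j : σ}

theorem monomial_mem_span_X_pair_pow_of_le (hij : i ≠ j) (m : σ →₀ ℕ) {k : ℕ}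
    (h : k ≤ m i + m j) :
    monomial m (1 : K) ∈ (Ideal.span {X i, X j} : Ideal (MvPolynomial σ K)) ^ k := by
  obtain ⟨a, b, hai, hbj, rfl⟩ : ∃ a b, a ≤ m i ∧ b ≤ m j ∧ a + b = k :=
    ⟨min (m i) k, k - min (m i) k, min_le_left _ _, by omega, by omega⟩
  have hpow : (X i ^ a * X j ^ b : MvPolynomial σ K) ∈ Ideal.span {X i, X j} ^ (a + b) := by
    rw [pow_add]
    exact Ideal.mul_mem_mul
      (Ideal.pow_mem_pow (Ideal.subset_span (by simp)) a)
      (Ideal.pow_mem_pow (Ideal.subset_span (by simp)) b)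
  have hdvd : (X i ^ a * X j ^ b : MvPolynomial σ K) ∣ monomial m 1 := by
    rw [X_pow_eq_monomial, X_pow_eq_monomial, monomial_mul, one_mul, monomial_dvd_monomial]
    refine ⟨Or.inr fun v => ?_, one_dvd _⟩
    by_cases hvi : v = i <;> by_cases hvj : v = j <;>
      simp_all [Finsupp.single_apply, eq_comm]
  exact Ideal.mem_of_dvd _ hdvd hpow

theorem aeval_ite_pair_monomial [DecidableEq σ] (hij : i ≠ j) (m : σ →₀ ℕ) :
    aeval (fun v => if v = i ∨ v = j then (Polynomial.X : Polynomial K) else 1)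
        (monomial m (1 : K)) =
      Polynomial.X ^ (m i + m j) := by
  have hpow : ∀ v, (if v = i ∨ v = j then Polynomial.X else 1 : Polynomial K) ^ m v =
      Polynomial.X ^ (if v ∈ ({i, j} : Finset σ) then m v else 0) := by
    intro v
    split_ifs <;> simp_all
  rw [aeval_monomial, map_one, one_mul,
    Finsupp.prod_of_support_subset m Finset.subset_union_left _ (fun _ _ => pow_zero _),
    Finset.prod_congr rfl fun v _ => hpow v, Finset.prod_pow_eq_pow_sum, Finset.sum_ite_mem,
    Finset.inter_eq_right.mpr Finset.subset_union_right, Finset.sum_pair hij]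

/- Specialising `x_i, x_j ↦ t` and every other variable to `1` maps `(x_i, x_j)^k` into `(t^k)`
and `x^m` to `t^(m_i + m_j)`. -/
theorem le_of_monomial_mem_span_X_pair_pow (hij : i ≠ j) {m : σ →₀ ℕ} {k : ℕ}
    (h : monomial m (1 : K) ∈ (Ideal.span {X i, X j} : Ideal (MvPolynomial σ K)) ^ k) :
    k ≤ m i + m j := by
  classical
  set φ := aeval (R := K) fun v => if v = i ∨ v = j then (Polynomial.X : Polynomial K) else 1
  have hmap := Ideal.mem_map_of_mem φ h
  rw [Ideal.map_pow, Ideal.map_span, Set.image_pair] at hmap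
  simp only [φ, aeval_X, true_or, or_true, if_true, Set.pair_eq_singleton,
    Ideal.span_singleton_pow, Ideal.mem_span_singleton, aeval_ite_pair_monomial hij] at hmap
  exact (pow_dvd_pow_iff Polynomial.X_ne_zero Polynomial.not_isUnit_X).mp hmap

theorem monomial_mem_span_X_pair_pow_iff (hij : i ≠ j) {m : σ →₀ ℕ} {k : ℕ} :
    monomial m (1 : K) ∈ (Ideal.span {X i, X j} : Ideal (MvPolynomial σ K)) ^ k ↔
      k ≤ m i + m j :=
  ⟨le_of_monomial_mem_span_X_pair_pow hij, monomial_mem_span_X_pair_pow_of_le hij m⟩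

end MvPolynomial

section VertexCover

variable {V : Type*} {G : SimpleGraph V}

theorem exists_isMinVertexCover [Finite V] (G : SimpleGraph V) : ∃ C, IsMinVertexCover G C := by
  obtain ⟨C, -, hC⟩ := exists_minimal_le_of_wellFoundedLT (IsVertexCover G) Set.univ
    fun _ _ _ => Or.inl trivial
  exact ⟨C, hC.prop, fun _ hD => hC.not_prop_of_lt hD⟩

theorem IsMinVertexCover.exists_adj_notMem {C : Set V} (hC : IsMinVertexCover G C) {i : V}
    (hi : i ∈ C) : ∃ j, G.Adj i j ∧ j ∉ C := by
  have hnot : ¬ IsVertexCover G (C \ {i}) := hC.2 _ (Set.sdiff_singleton_ssubset.mpr hi)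
  simp only [IsVertexCover, not_forall, not_or, Set.mem_sdiff, Set.mem_singleton_iff] at hnot
  obtain ⟨a, b, hab, hna, hnb⟩ := hnot
  rcases hC.1 hab with ha | hb
  · obtain rfl : a = i := by tauto
    exact ⟨b, hab, fun hb => hnb ⟨hb, hab.ne'⟩⟩
  · obtain rfl : b = i := by tauto
    exact ⟨a, hab.symm, fun ha => hna ⟨ha, hab.ne⟩⟩

theorem IsMaxIndepSet.isMinVertexCover_compl {A : Set V} (hA : IsMaxIndepSet G A) :
    IsMinVertexCover G Aᶜ := by
  refine ⟨fun a b hab => ?_, fun D hD hcov => ?_⟩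
  · by_contra! h
    exact hA.1 (by simpa using h.1) (by simpa using h.2) hab
  · have hind : IsIndepSet G Dᶜ := fun a ha b hb hab => (hcov hab).elim ha hb
    have := hA.2 Dᶜ hind (Set.subset_compl_comm.mp hD.subset)
    exact hD.ne (by rw [this, compl_compl])

theorem unmixed_of_forall_isMinVertexCover_ncard_eq [Finite V] {d : ℕ}
    (h : ∀ C, IsMinVertexCover G C → C.ncard = d) : Unmixed G := by
  intro A B hA hB
  have hAc := h _ hA.isMinVertexCover_compl
  have hBc := h _ hB.isMinVertexCover_compl
  have := Set.ncard_add_ncard_compl A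
  have := Set.ncard_add_ncard_compl B
  omega

end VertexCover

/-- The exponent vector of `x_C^k`. -/
noncomputable def indicatorExponent {V : Type*} [Finite V] (C : Set V) (k : ℕ) : V →₀ ℕ :=
  Finsupp.equivFunOnFinite.symm (C.indicator fun _ => k)

theorem mdeg_indicatorExponent {V : Type*} [Fintype V] (C : Set V) (k : ℕ) :
    mdeg (indicatorExponent C k) = k * C.ncard := by
  classical
  rw [mdeg, Finsupp.sum_fintype _ _ fun _ => rfl]
  simp [indicatorExponent, Set.indicator_apply, Finset.sum_ite, Set.ncard_eq_toFinset_card',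
    mul_comm]

section CoverIdeal

variable {V K : Type*} [Field K] {G : SimpleGraph V}

theorem monomial_mem_symbPow_iff {k : ℕ} {m : V →₀ ℕ} :
    monomial m (1 : K) ∈ symbPow K G k ↔ ∀ ⦃a b⦄, G.Adj a b → k ≤ m a + m b := by
  simp only [symbPow, Ideal.mem_iInf, Prod.forall]
  exact forall₂_congr fun a b => forall_congr' fun hab => monomial_mem_span_X_pair_pow_iff hab.ne

theorem monomial_mem_coverIdeal_iff {m : V →₀ ℕ} :
    monomial m (1 : K) ∈ coverIdeal K G ↔ ∀ ⦃a b⦄, G.Adj a b → 1 ≤ m a + m b := by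
  rw [← monomial_mem_symbPow_iff (K := K) (k := 1)]
  simp only [coverIdeal, symbPow, pow_one]

theorem IsMinVertexCover.isMinGen_symbPow [Finite V] {C : Set V} (hC : IsMinVertexCover G C)
    {k : ℕ} (hk : k ≠ 0) : IsMinGen (symbPow K G k) (indicatorExponent C k) := by
  refine ⟨monomial_mem_symbPow_iff.mpr fun a b hab => ?_, fun i hi => ?_⟩
  · rcases hC.1 hab with h | h <;> simp [indicatorExponent, h]
  · have hiC : i ∈ C := by
      by_contra h
      simp [indicatorExponent, h] at hi
    obtain ⟨j, hij, hjC⟩ := hC.exists_adj_notMem hiC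
    rw [monomial_mem_symbPow_iff]
    intro hmem
    have : k ≤ (k - 1) + 0 := by
      simpa [indicatorExponent, hiC, hjC, hij.ne'] using hmem hij
    omega

theorem IsMinGen.coverIdeal_apply_eq_one_and_exists_adj {m : V →₀ ℕ}
    (hm : IsMinGen (coverIdeal K G) m) {i : V} (hi : m i ≠ 0) :
    m i = 1 ∧ ∃ j, G.Adj i j ∧ m j = 0 := by
  classical
  have hmem := hm.1
  have hnot := hm.2 i hi
  simp only [monomial_mem_coverIdeal_iff, not_forall, not_le,
    Finsupp.tsub_apply, Finsupp.single_apply] at hmem hnot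
  obtain ⟨a, b, hab, hlt⟩ := hnot
  have hcov := hmem hab
  rcases eq_or_ne i a with rfl | hia
  · simp only [if_pos, if_neg hab.ne] at hlt
    exact ⟨by omega, b, hab, by omega⟩
  rcases eq_or_ne i b with rfl | hib
  · simp only [if_pos, if_neg hia] at hlt
    exact ⟨by omega, a, hab.symm, by omega⟩
  simp only [if_neg hia, if_neg hib] at hlt
  omega

theorem IsMinGen.coverIdeal_isMinVertexCover {m : V →₀ ℕ} (hm : IsMinGen (coverIdeal K G) m) :
    IsMinVertexCover G ↑m.support := by
  refine ⟨fun a b hab => ?_, fun D hD hcov => ?_⟩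
  · have := monomial_mem_coverIdeal_iff.mp hm.1 hab
    simp only [Finset.mem_coe, Finsupp.mem_support_iff]
    omega
  · obtain ⟨i, hi, hiD⟩ := Set.exists_of_ssubset hD
    obtain ⟨-, j, hij, hj⟩ :=
      hm.coverIdeal_apply_eq_one_and_exists_adj (Finsupp.mem_support_iff.mp hi)
    exact (hcov hij).elim hiD fun hjD => Finsupp.mem_support_iff.mp (hD.subset hjD) hj

theorem IsMinGen.mdeg_coverIdeal {m : V →₀ ℕ} (hm : IsMinGen (coverIdeal K G) m) :
    mdeg m = m.support.card := by
  rw [mdeg, Finsupp.sum, Finset.card_eq_sum_ones]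
  exact Finset.sum_congr rfl fun v hv =>
    (hm.coverIdeal_apply_eq_one_and_exists_adj (Finsupp.mem_support_iff.mp hv)).1

end CoverIdeal

theorem statement7_general {V : Type*} [Fintype V] (K : Type*) [Field K] (G : SimpleGraph V)
    (k : ℕ) (hk : 2 ≤ k)
    (hsingle : ∀ m m' : V →₀ ℕ, IsMinGen (symbPow K G k) m → IsMinGen (symbPow K G k) m' →
      mdeg m = mdeg m') :
    ∃ d : ℕ,
      (∀ m : V →₀ ℕ, IsMinGen (coverIdeal K G) m → mdeg m = d) ∧
      (∀ C : Set V, IsMinVertexCover G C → C.ncard = d) ∧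
      Unmixed G ∧
      (∀ m : V →₀ ℕ, IsMinGen (symbPow K G k) m → mdeg m = k * d) := by
  have hk0 : k ≠ 0 := by omega
  obtain ⟨C₀, hC₀⟩ := exists_isMinVertexCover G
  have hC₀gen := hC₀.isMinGen_symbPow (K := K) hk0
  have hcovers : ∀ C, IsMinVertexCover G C → C.ncard = C₀.ncard := fun C hC =>
    Nat.eq_of_mul_eq_mul_left (Nat.pos_of_ne_zero hk0) <| by
      simpa only [mdeg_indicatorExponent] using hsingle _ _ (hC.isMinGen_symbPow hk0) hC₀gen
  refine ⟨C₀.ncard, fun m hm => ?_, hcovers, unmixed_of_forall_isMinVertexCover_ncard_eq hcovers,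
    fun m hm => ?_⟩
  · rw [hm.mdeg_coverIdeal, ← Set.ncard_coe_finset, hcovers _ hm.coverIdeal_isMinVertexCover]
  · rw [hsingle m _ hm hC₀gen, mdeg_indicatorExponent]

/-- from the proof of Lemma `singdeg`: if `G` has no isolated vertices and
`J(G)^{(k)}` is generated in a single degree for some `k ≥ 2`, then `J(G)` is generated in a
single degree `d`; in particular all minimal vertex covers of `G` have cardinality `d` (so
`G` is unmixed) and every minimal monomial generator of `J(G)^{(k)}` has degree `k * d`. -/
theorem statement7 {V : Type*} [Fintype V] (K : Type*) [Field K] (G : SimpleGraph V)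
    (hiso : HasNoIsolatedVertex G) (k : ℕ) (hk : 2 ≤ k)
    (hsingle : ∀ m m' : V →₀ ℕ, IsMinGen (symbPow K G k) m → IsMinGen (symbPow K G k) m' →
      mdeg m = mdeg m') :
    ∃ d : ℕ,
      (∀ m : V →₀ ℕ, IsMinGen (coverIdeal K G) m → mdeg m = d) ∧
      (∀ C : Set V, IsMinVertexCover G C → C.ncard = d) ∧
      Unmixed G ∧
      (∀ m : V →₀ ℕ, IsMinGen (symbPow K G k) m → mdeg m = k * d) :=
  statement7_general K G k hk hsingle
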